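/- arXiv:2108.02391 — 5 statements merged into one kernel-verified Lean document; each statement's English description precedes it below -/
import Mathlib

section
/- If h : S^n → ℝ^d has ℓ₁-sensitivity Δ, meaning ‖h(D) − h(D')‖₁ ≤ Δ for all datasets D, D' differing in one element, then the mechanism A(D) = h(D) + Z with Z having i.i.d. Laplace(Δ/ε) coordinates is ε-differentially private: for all neighboring D, D' and measurable O, P(A(D) ∈ O) ≤ e^ε·P(A(D') ∈ O). -/
open MeasureTheory

lemma lintegral_pi_prod_aux : ∀ (d : ℕ) (f : Fin d → ℝ → ENNReal), (∀ i, Measurable (f i)) →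
    ∫⁻ x : Fin d → ℝ, ∏ i, f i (x i) ∂(Measure.pi fun _ => (volume : Measure ℝ))
      = ∏ i, ∫⁻ t, f i t := by
  intro d
  induction d with
  | zero =>
    intro f hf
    simp [Measure.pi_univ]
  | succ m ih =>
    intro f hf
    have hF : Measurable fun x : Fin (m+1) → ℝ => ∏ i, f i (x i) :=
      Finset.measurable_prod _ fun i _ => (hf i).comp (measurable_pi_apply i)
    have hmp := (measurePreserving_piFinSuccAbove
      (fun _ : Fin (m+1) => (volume : Measure ℝ)) 0).symm
    rw [← hmp.lintegral_comp hF]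
    have hrw : ∀ p : ℝ × (Fin m → ℝ),
        (∏ i, f i (((MeasurableEquiv.piFinSuccAbove (fun _ => ℝ) 0).symm p) i))
          = f 0 p.1 * ∏ j, f j.succ (p.2 j) := by
      intro p
      have : ((MeasurableEquiv.piFinSuccAbove (fun _ : Fin (m+1) => ℝ) 0).symm p)
          = Fin.cons p.1 p.2 := by
        simp [MeasurableEquiv.piFinSuccAbove, Fin.insertNthEquiv, Fin.insertNth_zero]
      rw [this, Fin.prod_univ_succ]
      simp
    simp only [hrw]
    rw [lintegral_prod_mul (μ := (volume : Measure ℝ))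
      (ν := Measure.pi fun _ : Fin m => (volume : Measure ℝ))
      (f := fun a => f 0 a) (g := fun z : Fin m → ℝ => ∏ j, f j.succ (z j))
      ((hf 0).aemeasurable)
      ((Finset.measurable_prod Finset.univ fun j _ =>
        (hf j.succ).comp (measurable_pi_apply j)).aemeasurable)]
    rw [ih (fun j => f j.succ) (fun j => hf j.succ), Fin.prod_univ_succ]

lemma pi_withDensity_ofReal {d : ℕ} (f : ℝ → ℝ) (hf : Measurable f) :
    Measure.pi (fun _ : Fin d => volume.withDensity fun z => ENNReal.ofReal (f z))
      = (volume : Measure (Fin d → ℝ)).withDensity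
          (fun x => ∏ i, ENNReal.ofReal (f (x i))) := by
  have hg : Measurable fun z => ENNReal.ofReal (f z) := ENNReal.measurable_ofReal.comp hf
  refine Measure.pi_eq (μ := fun _ : Fin d => (volume : Measure ℝ).withDensity
    fun z => ENNReal.ofReal (f z)) fun s hs => ?_
  rw [withDensity_apply _ (MeasurableSet.univ_pi hs),
    ← lintegral_indicator (MeasurableSet.univ_pi hs)
      (fun x => ∏ i, ENNReal.ofReal (f (x i)))]
  have hind : ∀ x : Fin d → ℝ,
      (Set.pi Set.univ s).indicator (fun x => ∏ i, ENNReal.ofReal (f (x i))) x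
        = ∏ i, (s i).indicator (fun t => ENNReal.ofReal (f t)) (x i) := by
    intro x
    by_cases hx : x ∈ Set.pi Set.univ s
    · rw [Set.indicator_of_mem hx]
      exact Finset.prod_congr rfl fun i _ =>
        (Set.indicator_of_mem (hx i (Set.mem_univ i)) (fun t => ENNReal.ofReal (f t))).symm
    · rw [Set.indicator_of_notMem hx]
      simp only [Set.mem_pi, Set.mem_univ, forall_true_left, not_forall] at hx
      obtain ⟨i, hi⟩ := hx
      exact (Finset.prod_eq_zero (Finset.mem_univ i)
        (by rw [Set.indicator_of_notMem hi])).symm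
  simp only [hind]
  rw [volume_pi, lintegral_pi_prod_aux d (fun i => (s i).indicator fun t => ENNReal.ofReal (f t))
    (fun i => hg.indicator (hs i))]
  exact Finset.prod_congr rfl fun i _ => by
    rw [lintegral_indicator (hs i) _, withDensity_apply _ (hs i)]

lemma laplace_prod_le {d : ℕ} (ε Δ : ℝ) (hε : 0 < ε) (hΔ : 0 < Δ)
    (u v : Fin d → ℝ) (hsum : ∑ i, |u i - v i| ≤ Δ) :
    ∏ i, (1/(2*(Δ/ε))) * Real.exp (-|u i|/(Δ/ε))
      ≤ Real.exp ε * ∏ i, (1/(2*(Δ/ε))) * Real.exp (-|v i|/(Δ/ε)) := by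
  have hb : 0 < Δ/ε := div_pos hΔ hε
  have hexp : ∀ w : Fin d → ℝ, ∏ i, (1/(2*(Δ/ε))) * Real.exp (-|w i|/(Δ/ε))
      = (1/(2*(Δ/ε)))^d * Real.exp (∑ i, -|w i|/(Δ/ε)) := by
    intro w
    rw [Finset.prod_mul_distrib, Finset.prod_const, Real.exp_sum]
    simp
  rw [hexp, hexp, mul_left_comm, ← Real.exp_add]
  refine mul_le_mul_of_nonneg_left ?_ (by positivity)
  rw [Real.exp_le_exp]
  have h2 : ∑ i, (|v i| - |u i|) ≤ Δ :=
    le_trans (Finset.sum_le_sum fun i _ => by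
      have h3 := abs_sub_abs_le_abs_sub (v i) (u i)
      rwa [abs_sub_comm] at h3) hsum
  have h4 : (∑ i, (|v i| - |u i|))/(Δ/ε) ≤ Δ/(Δ/ε) := by gcongr
  have h5 : Δ/(Δ/ε) = ε := by
    field_simp
  have h6 : ∑ i, -|u i|/(Δ/ε) - ∑ i, -|v i|/(Δ/ε) = (∑ i, (|v i| - |u i|))/(Δ/ε) := by
    rw [← Finset.sum_sub_distrib, Finset.sum_div]
    exact Finset.sum_congr rfl fun i _ => by ring
  linarith

lemma laplace_pt {d : ℕ} (ε Δ : ℝ) (hε : 0 < ε) (hΔ : 0 < Δ) (u v : Fin d → ℝ)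
    (hsum : ∑ i, |u i - v i| ≤ Δ) :
    (∏ i, ENNReal.ofReal ((1/(2*(Δ/ε))) * Real.exp (-|u i|/(Δ/ε))))
      ≤ ENNReal.ofReal (Real.exp ε)
        * ∏ i, ENNReal.ofReal ((1/(2*(Δ/ε))) * Real.exp (-|v i|/(Δ/ε))) := by
  have hb : 0 < Δ/ε := div_pos hΔ hε
  have h0 : ∀ (w : Fin d → ℝ) (i : Fin d),
      0 ≤ (1/(2*(Δ/ε))) * Real.exp (-|w i|/(Δ/ε)) := fun w i => by positivity
  rw [← ENNReal.ofReal_prod_of_nonneg (fun i _ => h0 u i),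
    ← ENNReal.ofReal_prod_of_nonneg (fun i _ => h0 v i),
    ← ENNReal.ofReal_mul (Real.exp_nonneg ε)]
  exact ENNReal.ofReal_le_ofReal (laplace_prod_le ε Δ hε hΔ u v hsum)

/-- Laplace mechanism: if `h : S^n → ℝ^d` has `ℓ₁`-sensitivity `Δ` (over datasets
differing in one element), then `A(D) = h(D) + Z`, with `Z` having i.i.d.
`Laplace(Δ/ε)` coordinates, is `ε`-differentially private. -/
theorem stmt_7 {S : Type*} {n d : ℕ} (ε Δ : ℝ) (hε : 0 < ε) (hΔ : 0 < Δ)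
    (h : (Fin n → S) → (Fin d → ℝ))
    (hsens : ∀ D D' : Fin n → S, (∃ j, ∀ i, i ≠ j → D i = D' i) →
      ∑ i, |h D i - h D' i| ≤ Δ)
    (ν : Measure (Fin d → ℝ))
    (hν : ν = Measure.pi (fun _ : Fin d =>
      volume.withDensity (fun z => ENNReal.ofReal
        ((1/(2*(Δ/ε))) * Real.exp (-|z|/(Δ/ε))))))
    (A : (Fin n → S) → Measure (Fin d → ℝ))
    (hA : ∀ D, A D = ν.map (fun z => h D + z)) :
    ∀ D D' : Fin n → S, (∃ j, ∀ i, i ≠ j → D i = D' i) →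
      ∀ O : Set (Fin d → ℝ), MeasurableSet O →
        A D O ≤ ENNReal.ofReal (Real.exp ε) * A D' O := by
  intro D D' hDD' O hO
  have hb : 0 < Δ / ε := div_pos hΔ hε
  have hfmeas : Measurable fun z : ℝ => (1/(2*(Δ/ε))) * Real.exp (-|z|/(Δ/ε)) := by fun_prop
  set F : (Fin d → ℝ) → ENNReal :=
    fun x => ∏ i, ENNReal.ofReal ((1/(2*(Δ/ε))) * Real.exp (-|x i|/(Δ/ε))) with hFdef
  have hFmeas : Measurable F :=
    Finset.measurable_prod _ fun i _ =>
      (ENNReal.measurable_ofReal.comp hfmeas).comp (measurable_pi_apply i)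
  have hν' : ν = (volume : Measure (Fin d → ℝ)).withDensity F := by
    rw [hν]; exact pi_withDensity_ofReal _ hfmeas
  have hcomp : ∀ E : Fin n → S, A E O = ∫⁻ y in O, F (y - h E) ∂volume := by
    intro E
    have hmeas : Measurable fun z : Fin d → ℝ => h E + z :=
      measurable_const.add measurable_id
    rw [hA E, Measure.map_apply hmeas hO, hν',
      withDensity_apply _ (hmeas hO), ← lintegral_indicator (hmeas hO) F]
    have hptw : ∀ z, ((fun z => h E + z) ⁻¹' O).indicator F z
        = O.indicator (fun y => F (y - h E)) (h E + z) := by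
      intro z
      by_cases hz : h E + z ∈ O
      · rw [Set.indicator_of_mem (show z ∈ (fun z => h E + z) ⁻¹' O from hz) F,
          Set.indicator_of_mem hz, add_sub_cancel_left]
      · rw [Set.indicator_of_notMem (show z ∉ (fun z => h E + z) ⁻¹' O from hz) F,
          Set.indicator_of_notMem hz]
    simp only [hptw]
    rw [lintegral_add_left_eq_self (O.indicator fun y => F (y - h E)) (h E),
      lintegral_indicator hO]
  have hpt : ∀ y : Fin d → ℝ, F (y - h D) ≤ ENNReal.ofReal (Real.exp ε) * F (y - h D') := by
    intro y
    refine laplace_pt ε Δ hε hΔ (y - h D) (y - h D') ?_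
    calc ∑ i, |(y - h D) i - (y - h D') i| = ∑ i, |h D i - h D' i| := by
          refine Finset.sum_congr rfl fun i _ => ?_
          simp only [Pi.sub_apply]
          rw [abs_sub_comm]
          ring_nf
      _ ≤ Δ := hsens D D' hDD'
  calc A D O = ∫⁻ y in O, F (y - h D) ∂volume := hcomp D
    _ ≤ ∫⁻ y in O, ENNReal.ofReal (Real.exp ε) * F (y - h D') ∂volume :=
        lintegral_mono fun y => hpt y
    _ = ENNReal.ofReal (Real.exp ε) * ∫⁻ y in O, F (y - h D') ∂volume :=
        lintegral_const_mul' _ _ ENNReal.ofReal_ne_top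
    _ = ENNReal.ofReal (Real.exp ε) * A D' O := by rw [← hcomp D']
end

section
/- Let f have κ-growth with constant λ > 0 and κ ≥ 2, let ρ > 0, and define radii D_i = 2^{−i}D₀. Suppose at each stage i, if the minimizer x* lies in the ball of radius D_i around x_i, then f(x_{i+1}) − f(x*) ≤ D_i·ρ. If D_i ≥ (κ·2^κ·ρ/λ)^{1/(κ−1)} and ‖x_i − x*‖₂ ≤ D_i, then ‖x_{i+1} − x*‖₂ ≤ D_{i+1} = D_i/2. -/
/-- Localization induction step: if `f` has `(λ,κ)`-growth around `x⋆` with `κ ≥ 2`,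
`D_i ≥ (κ·2^κ·ρ/λ)^(1/(κ−1))`, `‖x_i − x⋆‖ ≤ D_i`, and the stage guarantee
`f(x_{i+1}) − f(x⋆) ≤ D_i·ρ` holds, then `‖x_{i+1} − x⋆‖ ≤ D_i/2`. -/
theorem stmt_9 {d : ℕ} (f : EuclideanSpace ℝ (Fin d) → ℝ)
    (xstar xi xi1 : EuclideanSpace ℝ (Fin d))
    (lam κ ρ Di : ℝ) (hlam : 0 < lam) (hκ : 2 ≤ κ) (hρ : 0 < ρ)
    (hgrowth : (lam / κ) * ‖xi1 - xstar‖ ^ κ ≤ f xi1 - f xstar)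
    (hDi : (κ * 2 ^ κ * ρ / lam) ^ (1/(κ-1)) ≤ Di)
    (hxi : ‖xi - xstar‖ ≤ Di)
    (herr : ‖xi - xstar‖ ≤ Di → f xi1 - f xstar ≤ Di * ρ) :
    ‖xi1 - xstar‖ ≤ Di / 2 := by
  set r := ‖xi1 - xstar‖ with hrdef
  have hr0 : 0 ≤ r := norm_nonneg _
  have hκ0 : (0:ℝ) < κ := by linarith
  have h2κ : (0:ℝ) < (2:ℝ) ^ κ := Real.rpow_pos_of_pos two_pos κ
  have hC : 0 < κ * 2 ^ κ * ρ / lam := by positivity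
  have hDi0 : 0 < Di := lt_of_lt_of_le (Real.rpow_pos_of_pos hC _) hDi
  have hκ1 : (0:ℝ) < κ - 1 := by linarith
  have hC' : κ * 2 ^ κ * ρ / lam ≤ Di ^ (κ - 1) := by
    have h := Real.rpow_le_rpow (Real.rpow_pos_of_pos hC _).le hDi hκ1.le
    rwa [← Real.rpow_mul hC.le, one_div, inv_mul_cancel₀ hκ1.ne', Real.rpow_one] at h
  have hmain : r ^ κ ≤ (Di / 2) ^ κ := by
    have h1 : (lam / κ) * r ^ κ ≤ Di * ρ := le_trans hgrowth (herr hxi)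
    have h2 : r ^ κ ≤ κ * Di * ρ / lam := by
      rw [le_div_iff₀ hlam]
      rw [div_mul_eq_mul_div, div_le_iff₀ hκ0] at h1
      nlinarith
    have h3 : (Di / 2) ^ κ = Di ^ (κ - 1) * Di / 2 ^ κ := by
      rw [Real.div_rpow hDi0.le (by norm_num : (0:ℝ) ≤ 2),
        ← Real.rpow_add_one hDi0.ne' (κ - 1)]
      ring_nf
    have h4 : κ * Di * ρ / lam ≤ (Di / 2) ^ κ := by
      rw [h3, div_le_div_iff₀ hlam h2κ]
      have := mul_le_mul_of_nonneg_right hC' hDi0.le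
      rw [div_mul_eq_mul_div, div_le_iff₀ hlam] at this
      nlinarith
    linarith
  by_contra h
  push_neg at h
  have := Real.rpow_lt_rpow (by positivity : (0:ℝ) ≤ Di / 2) h hκ0
  linarith
end

section
/- Let κ ∈ (1,2], δ ∈ (0,1/2], a = (1/2)δ^{1/(κ−1)}, and define f(x) = ((1+δ)/2)·F₊(x) + ((1−δ)/2)·F₋(x) on [−1,1], where F₊(x) = |x−a| for x ≤ a and |x−a|^κ for x ≥ a, and F₋(x) = |x+a|^κ for x ≤ −a and |x+a| for x ≥ −a. Then f attains its minimum over [−1,1] at x = a with minimal value a(1−δ), and for all x ∈ [−a, a], f(x) − f(a) = δ(a − x) ≥ (a − x)^κ. -/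
/-- One-dimensional hard instance: for `κ ∈ (1,2]`, `δ ∈ (0,1/2]`,
`a = (1/2)δ^{1/(κ−1)}`, and
`f(x) = ((1+δ)/2)·F₊(x) + ((1−δ)/2)·F₋(x)` with
`F₊(x) = |x−a|` for `x ≤ a`, `|x−a|^κ` for `x ≥ a`, and
`F₋(x) = |x+a|^κ` for `x ≤ −a`, `|x+a|` for `x ≥ −a`,
`f` attains its minimum over `[−1,1]` at `x = a` with value `a(1−δ)`, and for all
`x ∈ [−a,a]`, `f(x) − f(a) = δ(a−x) ≥ (a−x)^κ`. -/
theorem stmt_12 (κ δ : ℝ) (hκ : κ ∈ Set.Ioc (1:ℝ) 2) (hδ : δ ∈ Set.Ioc (0:ℝ) (1/2))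
    (a : ℝ) (ha : a = (1/2) * δ ^ (1/(κ-1)))
    (Fp Fm f : ℝ → ℝ)
    (hFp : ∀ x, Fp x = if x ≤ a then |x - a| else |x - a| ^ κ)
    (hFm : ∀ x, Fm x = if x ≤ -a then |x + a| ^ κ else |x + a|)
    (hf : ∀ x, f x = ((1 + δ)/2) * Fp x + ((1 - δ)/2) * Fm x) :
    (∀ x ∈ Set.Icc (-1:ℝ) 1, f a ≤ f x) ∧
    f a = a * (1 - δ) ∧
    (∀ x ∈ Set.Icc (-a) a, f x - f a = δ * (a - x) ∧ (a - x) ^ κ ≤ δ * (a - x)) := by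
  obtain ⟨hκ1, hκ2⟩ := hκ
  obtain ⟨hδ0, hδh⟩ := hδ
  have hκ0 : κ ≠ 0 := by linarith
  have hk1 : 0 < κ - 1 := by linarith
  have ha0 : 0 < a := by rw [ha]; positivity
  have h2a : (2*a) ^ (κ-1) = δ := by
    rw [ha, show (2:ℝ) * (1/2 * δ ^ (1/(κ-1))) = δ ^ (1/(κ-1)) by ring,
      ← Real.rpow_mul hδ0.le, one_div_mul_cancel hk1.ne', Real.rpow_one]
  have key : ∀ t : ℝ, 0 ≤ t → t ≤ 2*a → t ^ κ ≤ δ * t := by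
    intro t ht0 ht2
    rcases eq_or_lt_of_le ht0 with h | h
    · rw [← h, Real.zero_rpow hκ0]; simp
    · have h1 : t ^ (κ-1) ≤ δ := by
        rw [← h2a]
        exact Real.rpow_le_rpow ht0 ht2 hk1.le
      have h2 : t ^ κ = t ^ (κ-1) * t := by
        have h3 := Real.rpow_add h (κ-1) 1
        rw [Real.rpow_one] at h3
        rw [← h3]
        congr 1
        ring
      rw [h2]
      exact mul_le_mul_of_nonneg_right h1 ht0 |>.trans_eq rfl
  have hfa : f a = a * (1 - δ) := by
    have h1 : Fp a = 0 := by rw [hFp, if_pos le_rfl]; simp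
    have h2 : Fm a = 2*a := by
      rw [hFm, if_neg (by linarith), abs_of_nonneg (by linarith)]; ring
    rw [hf, h1, h2]; ring
  have fval : ∀ x ∈ Set.Icc (-a) a, f x = a - δ * x := by
    rintro x ⟨hx1, hx2⟩
    have h1 : Fp x = a - x := by
      rw [hFp, if_pos hx2, abs_of_nonpos (by linarith)]; ring
    have h2 : Fm x = x + a := by
      rw [hFm]
      by_cases h : x ≤ -a
      · have hxe : x = -a := le_antisymm h hx1
        rw [if_pos h, hxe]
        simp [Real.zero_rpow hκ0]
      · rw [if_neg h, abs_of_nonneg (by linarith)]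
    rw [hf, h1, h2]; ring
  refine ⟨?_, hfa, ?_⟩
  · rintro x ⟨hx1, hx2⟩
    by_cases hxa : x ≤ a
    · by_cases hxm : -a ≤ x
      · rw [hfa, fval x ⟨hxm, hxa⟩]
        nlinarith [mul_le_mul_of_nonneg_left hxa hδ0.le]
      · push_neg at hxm
        have h1 : Fp x = a - x := by
          rw [hFp, if_pos hxa, abs_of_nonpos (by linarith)]; ring
        have h2 : 0 ≤ Fm x := by
          rw [hFm, if_pos (by linarith)]
          exact Real.rpow_nonneg (abs_nonneg _) κ
        rw [hfa, hf x, h1]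
        nlinarith
    · push_neg at hxa
      have h1 : 0 ≤ Fp x := by
        rw [hFp, if_neg (not_le.mpr hxa)]
        exact Real.rpow_nonneg (abs_nonneg _) κ
      have h2 : Fm x = x + a := by
        rw [hFm, if_neg (by linarith), abs_of_nonneg (by linarith)]
      rw [hfa, hf x, h2]
      nlinarith
  · rintro x ⟨hx1, hx2⟩
    refine ⟨by rw [hfa, fval x ⟨hx1, hx2⟩]; ring, ?_⟩
    exact key (a - x) (by linarith) (by linarith)
end

section
/- Let κ ∈ (1,2], δ ∈ (0,1/2], a = (1/2)δ^{1/(κ−1)}, and define h(x) = ((1+δ)/2)|x−a| + ((1−δ)/2)|x+a|^κ − a(1−δ) − (1/κ)|x−a|^κ for x ∈ [−1, −a]. Then h(x) ≥ 0 for all x ∈ [−1, −a]. -/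
/-- Key lemma for the `κ ∈ (1,2]` lower bound: with `δ ∈ (0,1/2]` and
`a = (1/2)δ^{1/(κ−1)}`, the function
`h(x) = ((1+δ)/2)|x−a| + ((1−δ)/2)|x+a|^κ − a(1−δ) − (1/κ)|x−a|^κ`
is nonnegative on `[−1, −a]`. -/
theorem stmt_14 (κ δ : ℝ) (hκ : κ ∈ Set.Ioc (1:ℝ) 2) (hδ : δ ∈ Set.Ioc (0:ℝ) (1/2))
    (a : ℝ) (ha : a = (1/2) * δ ^ (1/(κ-1)))
    (h : ℝ → ℝ)
    (hh : ∀ x, h x = ((1 + δ)/2) * |x - a| + ((1 - δ)/2) * |x + a| ^ κ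
        - a * (1 - δ) - (1/κ) * |x - a| ^ κ) :
    ∀ x ∈ Set.Icc (-1 : ℝ) (-a), 0 ≤ h x := by
  obtain ⟨hκ1, hκ2⟩ := hκ
  obtain ⟨hδ0, hδ2⟩ := hδ
  have hκ0 : (0:ℝ) < κ := by linarith
  have hp0 : (0:ℝ) < κ - 1 := by linarith
  have h2a : 2 * a = δ ^ (1/(κ-1)) := by rw [ha]; ring
  have h2apos : (0:ℝ) < 2 * a := by
    rw [h2a]; exact Real.rpow_pos_of_pos hδ0 _
  have hapos : 0 < a := by linarith
  have hde : (2*a) ^ (κ-1) = δ := by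
    rw [h2a, ← Real.rpow_mul hδ0.le, one_div, inv_mul_cancel₀ hp0.ne', Real.rpow_one]
  have ha1 : a ≤ 1/2 := by
    have : δ ^ (1/(κ-1)) ≤ 1 :=
      Real.rpow_le_one hδ0.le (by linarith) (by positivity)
    rw [ha]; linarith
  intro x hx
  obtain ⟨hx1, hx2⟩ := hx
  set v : ℝ := -x - a with hvdef
  have hv0 : 0 ≤ v := by simp only [hvdef]; linarith
  have hv1 : v ≤ 1 := by simp only [hvdef]; linarith
  have hupos : 0 < v + 2*a := by linarith
  have habs1 : |x - a| = v + 2*a := by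
    rw [abs_of_nonpos (by linarith)]; ring
  have habs2 : |x + a| = v := by
    rw [abs_of_nonpos (by linarith)]; ring
  rw [hh x, habs1, habs2]
  -- atoms
  set P : ℝ := (v + 2*a) ^ κ with hP
  set Q : ℝ := v ^ κ with hQ
  set R : ℝ := (v + 2*a) ^ (κ-1) with hR
  have hR0 : 0 ≤ R := (Real.rpow_pos_of_pos hupos _).le
  -- A : convexity
  have hA : P ≤ Q + κ * (2*a) * R := by
    have hs : -1 ≤ v / (v + 2*a) - 1 := by
      have : 0 ≤ v / (v + 2*a) := div_nonneg hv0 hupos.le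
      linarith
    have hB := one_add_mul_self_le_rpow_one_add hs (le_of_lt hκ1)
    have h1s : 1 + (v / (v + 2*a) - 1) = v / (v + 2*a) := by ring
    rw [h1s, Real.div_rpow hv0 hupos.le] at hB
    -- hB : 1 + κ * (v/(v+2a) - 1) ≤ v^κ / (v+2a)^κ
    have hPpos : 0 < P := Real.rpow_pos_of_pos hupos _
    have h2 : (1 + κ * (v / (v + 2*a) - 1)) * P ≤ Q := by
      calc (1 + κ * (v / (v + 2*a) - 1)) * P ≤ (Q / P) * P := by
            apply mul_le_mul_of_nonneg_right _ hPpos.le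
            exact hB
        _ = Q := by field_simp
    have hPR : P = R * (v + 2*a) := by
      rw [hP, hR, ← Real.rpow_add_one hupos.ne']
      ring_nf
    have hfrac : (v / (v + 2*a) - 1) * P = -(2*a) * R := by
      rw [hPR]; field_simp; ring
    nlinarith [h2, hfrac]
  -- B
  have hB : Q ≤ v := by
    rcases eq_or_lt_of_le hv0 with hv | hv
    · rw [hQ, ← hv, Real.zero_rpow hκ0.ne']
    · calc Q = v ^ κ := rfl
        _ ≤ v ^ (1:ℝ) := Real.rpow_le_rpow_of_exponent_ge hv hv1 (le_of_lt hκ1)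
        _ = v := Real.rpow_one v
  -- C
  have hC : 2*a*R ≤ 2*a*δ + (κ-1)*δ*v := by
    have hs : -1 ≤ v / (2*a) := by
      have := div_nonneg hv0 h2apos.le; linarith
    have hb := rpow_one_add_le_one_add_mul_self hs (le_of_lt hp0) (by linarith)
    -- (1 + v/(2a))^(κ-1) ≤ 1 + (κ-1)*(v/(2a))
    have key : R = (2*a)^(κ-1) * (1 + v/(2*a)) ^ (κ-1) := by
      rw [hR, ← Real.mul_rpow h2apos.le (by positivity)]
      congr 1
      field_simp
      ring
    have h1 : R ≤ δ * (1 + (κ-1) * (v/(2*a))) := by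
      rw [key, hde]
      exact mul_le_mul_of_nonneg_left hb hδ0.le
    have h2 : δ * (1 + (κ-1) * (v/(2*a))) * (2*a) = 2*a*δ + (κ-1)*δ*v := by
      field_simp
    have h3 := mul_le_mul_of_nonneg_right h1 h2apos.le
    rw [h2] at h3
    linarith
  -- final
  have hfin : 0 ≤ v * (κ - 1) * (1 - κ * δ) := by
    apply mul_nonneg (mul_nonneg hv0 (by linarith))
    nlinarith
  have hcoef : 0 ≤ (v - Q) * (1 - κ*(1-δ)/2) := by
    apply mul_nonneg (by linarith)
    nlinarith
  rw [sub_nonneg, one_div, inv_mul_eq_div, div_le_iff₀ hκ0]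
  have hCκ := mul_le_mul_of_nonneg_left hC hκ0.le
  clear_value v P Q R
  clear hh ha hde h2a habs1 habs2 hP hQ hR hvdef
  linarith [hA, hCκ, hcoef, hfin]
end

section
/- Packing lower bound contradiction: let A be an ε-DP algorithm, let D₁,…,D_M be datasets with pairwise Hamming distance at most d/(20ε), and let B₁,…,B_M be disjoint sets with P(A(D_i) ∈ B_i) ≥ 9/10 for all i. Then 1 ≥ (9/10)(1 + e^{−d/20}(M−1)); in particular, if M ≥ e^{d/8} and d ≥ 20, this is a contradiction. -/
open MeasureTheory
open scoped ENNReal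

lemma group_priv {S : Type*} {n : ℕ} [DecidableEq S]
    {Ω : Type*} [MeasurableSpace Ω]
    (A : (Fin n → S) → Measure Ω) (ε : ℝ) (hε : 0 ≤ ε)
    (hDP : ∀ D D' : Fin n → S, (∃ j, ∀ i, i ≠ j → D i = D' i) →
      ∀ O : Set Ω, MeasurableSet O → A D O ≤ ENNReal.ofReal (Real.exp ε) * A D' O)
    (O : Set Ω) (hO : MeasurableSet O) :
    ∀ k (D D' : Fin n → S),
      (Finset.univ.filter (fun i : Fin n => D i ≠ D' i)).card ≤ k →
      A D O ≤ ENNReal.ofReal (Real.exp ε) ^ k * A D' O := by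
  have hone : (1:ℝ≥0∞) ≤ ENNReal.ofReal (Real.exp ε) := by
    rw [show (1:ℝ≥0∞) = ENNReal.ofReal 1 by simp]
    exact ENNReal.ofReal_le_ofReal (Real.one_le_exp hε)
  intro k
  induction k with
  | zero =>
    intro D D' h
    have : D = D' := by
      funext i
      by_contra hne
      have : i ∈ Finset.univ.filter (fun i : Fin n => D i ≠ D' i) := by
        simp [hne]
      have := Finset.card_pos.mpr ⟨i, this⟩
      omega
    simp [this]
  | succ k ih =>
    intro D D' h
    by_cases hDD : D = D'
    · subst hDD
      calc A D O = 1 * A D O := (one_mul _).symm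
      _ ≤ ENNReal.ofReal (Real.exp ε) ^ (k+1) * A D O :=
          mul_le_mul_left (one_le_pow_of_one_le' hone _) _
    · obtain ⟨j, hj⟩ := Function.ne_iff.mp hDD
      set D'' := Function.update D j (D' j) with hD''
      have h1 : A D O ≤ ENNReal.ofReal (Real.exp ε) * A D'' O := by
        refine hDP D D'' ⟨j, fun i hi => ?_⟩ O hO
        simp [hD'', Function.update_of_ne hi]
      have hsub : (Finset.univ.filter (fun i : Fin n => D'' i ≠ D' i)) ⊆
          (Finset.univ.filter (fun i : Fin n => D i ≠ D' i)).erase j := by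
        intro i hi
        simp only [Finset.mem_filter, Finset.mem_erase, Finset.mem_univ, true_and] at hi ⊢
        rcases eq_or_ne i j with rfl | hij
        · exact absurd (by simp [hD'']) hi
        · exact ⟨hij, by simpa [hD'', Function.update_of_ne hij] using hi⟩
      have hjmem : j ∈ Finset.univ.filter (fun i : Fin n => D i ≠ D' i) := by simp [hj]
      have hcard : (Finset.univ.filter (fun i : Fin n => D'' i ≠ D' i)).card ≤ k := by
        have := Finset.card_le_card hsub
        rw [Finset.card_erase_of_mem hjmem] at this
        have hpos := Finset.card_pos.mpr ⟨j, hjmem⟩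
        omega
      have h2 := ih D'' D' hcard
      calc A D O ≤ ENNReal.ofReal (Real.exp ε) * A D'' O := h1
      _ ≤ ENNReal.ofReal (Real.exp ε) * (ENNReal.ofReal (Real.exp ε) ^ k * A D' O) :=
          mul_le_mul_right h2 _
      _ = ENNReal.ofReal (Real.exp ε) ^ (k+1) * A D' O := by ring

/-- Packing lower bound: if `A` is an `ε`-DP algorithm, `D₁,…,D_M` are datasets with
Hamming distance at most `d/(20ε)` from `D₁`, and `B₁,…,B_M` are disjoint sets with
`P(A(D_i) ∈ B_i) ≥ 9/10`, then `1 ≥ (9/10)(1 + e^{−d/20}(M−1))`; in particular, if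
`M ≥ e^{d/8}` and `d ≥ 20`, this is a contradiction. -/
theorem stmt_17 {S : Type*} {n : ℕ} [DecidableEq S]
    {Ω : Type*} [MeasurableSpace Ω]
    (A : (Fin n → S) → Measure Ω) [∀ D, IsProbabilityMeasure (A D)]
    (ε d : ℝ) (hε : 0 < ε) (hd : 0 < d)
    (hDP : ∀ D D' : Fin n → S, (∃ j, ∀ i, i ≠ j → D i = D' i) →
      ∀ O : Set Ω, MeasurableSet O → A D O ≤ ENNReal.ofReal (Real.exp ε) * A D' O)
    (M : ℕ) (hM : 1 ≤ M)
    (Ds : Fin M → (Fin n → S))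
    (hham : ∀ a b : Fin M,
      ((Finset.univ.filter (fun i : Fin n => Ds a i ≠ Ds b i)).card : ℝ) ≤ d / (20 * ε))
    (B : Fin M → Set Ω) (hBmeas : ∀ i, MeasurableSet (B i))
    (hdisj : Pairwise (fun i j => Disjoint (B i) (B j)))
    (hsucc : ∀ i, (9:ℝ)/10 ≤ ((A (Ds i)) (B i)).toReal) :
    (1:ℝ) ≥ (9/10) * (1 + Real.exp (-d/20) * (M - 1)) ∧
      (Real.exp (d/8) ≤ M → 20 ≤ d → False) := by
  have i0 : Fin M := ⟨0, hM⟩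
  set p : Fin M → ℝ := fun i => ((A (Ds i0)) (B i)).toReal with hp
  -- lower bound on p i for each i
  have hkey : ∀ i : Fin M, (9:ℝ)/10 * Real.exp (-d/20) ≤ p i := by
    intro i
    set c := (Finset.univ.filter (fun j : Fin n => Ds i j ≠ Ds i0 j)).card with hc
    have hgp := group_priv A ε hε.le hDP (B i) (hBmeas i) c (Ds i) (Ds i0) le_rfl
    have hcε : (c : ℝ) * ε ≤ d / 20 := by
      have h1 := hham i i0
      rw [← hc, le_div_iff₀ (by positivity)] at h1
      linarith
    have hpow : (ENNReal.ofReal (Real.exp ε)) ^ c ≤ ENNReal.ofReal (Real.exp (d/20)) := by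
      rw [← ENNReal.ofReal_pow (Real.exp_pos ε).le, ← Real.exp_nat_mul]
      exact ENNReal.ofReal_le_ofReal (Real.exp_le_exp.mpr hcε)
    have h2 : A (Ds i) (B i) ≤ ENNReal.ofReal (Real.exp (d/20)) * A (Ds i0) (B i) :=
      hgp.trans (mul_le_mul_left hpow _)
    have hfin : ENNReal.ofReal (Real.exp (d/20)) * A (Ds i0) (B i) ≠ ⊤ :=
      ENNReal.mul_ne_top ENNReal.ofReal_ne_top (measure_ne_top _ _)
    have h3 := ENNReal.toReal_le_toReal (measure_ne_top _ _) hfin |>.mpr h2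
    rw [ENNReal.toReal_mul, ENNReal.toReal_ofReal (Real.exp_pos _).le] at h3
    have h4 := hsucc i
    have hE := Real.exp_pos (d/20)
    have hprod : Real.exp (-d/20) * Real.exp (d/20) = 1 := by
      rw [← Real.exp_add]; ring_nf; exact Real.exp_zero
    have h5 := mul_le_mul_of_nonneg_left (h4.trans h3) (Real.exp_pos (-d/20)).le
    nlinarith [h5, hprod]
  -- sum bound
  have hsum1 : ∑ i, p i ≤ 1 := by
    have hmeas : (A (Ds i0)) (⋃ i, B i) = ∑' i, (A (Ds i0)) (B i) :=
      measure_iUnion hdisj hBmeas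
    have hle : ∑' i, (A (Ds i0)) (B i) ≤ 1 := by
      rw [← hmeas]; exact prob_le_one
    rw [tsum_fintype] at hle
    have := ENNReal.toReal_sum (s := Finset.univ) (f := fun i => (A (Ds i0)) (B i))
      (fun i _ => measure_ne_top _ _)
    rw [← this]
    calc (∑ i, (A (Ds i0)) (B i)).toReal ≤ (1:ℝ≥0∞).toReal :=
        ENNReal.toReal_mono (by simp) hle
    _ = 1 := by simp
  have hsplit : p i0 + ∑ i ∈ Finset.univ.erase i0, p i = ∑ i, p i :=
    Finset.add_sum_erase _ _ (Finset.mem_univ i0)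
  have hcard : (Finset.univ.erase i0).card = M - 1 := by
    rw [Finset.card_erase_of_mem (Finset.mem_univ i0)]; simp
  have hlow : ((M:ℝ) - 1) * ((9:ℝ)/10 * Real.exp (-d/20)) ≤
      ∑ i ∈ Finset.univ.erase i0, p i := by
    have := Finset.card_nsmul_le_sum (Finset.univ.erase i0) p
      ((9:ℝ)/10 * Real.exp (-d/20)) (fun i _ => hkey i)
    rw [hcard, nsmul_eq_mul] at this
    rwa [Nat.cast_sub hM, Nat.cast_one] at this
  have hp0 := hsucc i0
  have main : (1:ℝ) ≥ (9/10) * (1 + Real.exp (-d/20) * (M - 1)) := by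
    have : p i0 + ∑ i ∈ Finset.univ.erase i0, p i ≤ 1 := hsplit.trans_le hsum1
    nlinarith [hp0, hlow]
  refine ⟨main, fun hMe hd20 => ?_⟩
  have hexp1 : Real.exp (-d/20) * Real.exp (d/8) = Real.exp (3*d/40) := by
    rw [← Real.exp_add]; ring_nf
  have h25 : (5:ℝ)/2 ≤ Real.exp (3*d/40) := by
    have : (3:ℝ)/2 ≤ 3*d/40 := by linarith
    calc (5:ℝ)/2 = 1 + 3/2 := by norm_num
    _ ≤ Real.exp (3/2) := by linarith [Real.add_one_le_exp ((3:ℝ)/2)]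
    _ ≤ Real.exp (3*d/40) := Real.exp_le_exp.mpr this
  have hle1 : Real.exp (-d/20) ≤ 1 := Real.exp_le_one_iff.mpr (by linarith)
  have hpos := Real.exp_pos (-d/20)
  nlinarith [mul_le_mul_of_nonneg_left hMe hpos.le, main]
end
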